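/- Under the hole-punching graph-cluster randomization design with 0 < p_t < 1 and 0 < p_hp < 1, for t1 ≠ t2 in {0,1} the covariance of the Horvitz–Thompson estimators satisfies Cov[μ̂(t1), μ̂(t2)] = (1/N²)·[ (p(t1,t2)/(p(t1)·p(t2)) − 1)·Σ_{c∈𝒞} S_c(t1,t2) − (p(t1,t2)/(p(t1)·p(t2)))·Q(t1,t2) ]. -/

import Mathlib

open MeasureTheory ProbabilityTheory

/-- The Bernoulli measure on `Bool` with success probability `p`. -/
noncomputable def bernoulliMeasureBool (p : ℝ) : Measure Bool :=
  ENNReal.ofReal p • Measure.dirac true + ENNReal.ofReal (1 - p) • Measure.dirac false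

instance bernoulliMeasureBool.instIsFiniteMeasure (p : ℝ) :
    IsFiniteMeasure (bernoulliMeasureBool p) where
  measure_univ_lt_top := by
    simp [bernoulliMeasureBool]

/-- The hole-punching graph-cluster randomization design measure on the product space
`(C → Bool) × (Fin N → Bool)`: i.i.d. Bernoulli(`pt`) cluster-level assignments and
i.i.d. Bernoulli(`php`) unit-level flips, all mutually independent. -/
noncomputable def designMeasure (C : Type*) [Fintype C] (N : ℕ) (pt php : ℝ) :
    Measure ((C → Bool) × (Fin N → Bool)) :=
  (Measure.pi fun _ : C => bernoulliMeasureBool pt).prod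
    (Measure.pi fun _ : Fin N => bernoulliMeasureBool php)

/-- The treatment `Z_i` of unit `i`: cluster assignment XOR individual flip. -/
def treat {C : Type*} {N : ℕ} (c : Fin N → C) (i : Fin N)
    (ω : (C → Bool) × (Fin N → Bool)) : Bool :=
  xor (ω.1 (c i)) (ω.2 i)

/-- The marginal propensity `p_i(t) = Pr(Z_i = t)`. -/
noncomputable def margProp {C : Type*} [Fintype C] {N : ℕ} (pt php : ℝ) (c : Fin N → C)
    (i : Fin N) (t : Bool) : ℝ :=
  (designMeasure C N pt php {ω | treat c i ω = t}).toReal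

/-- The joint propensity `p_{ij}(t₁,t₂) = Pr(Z_i = t₁ ∧ Z_j = t₂)`. -/
noncomputable def jointProp {C : Type*} [Fintype C] {N : ℕ} (pt php : ℝ) (c : Fin N → C)
    (i j : Fin N) (t1 t2 : Bool) : ℝ :=
  (designMeasure C N pt php {ω | treat c i ω = t1 ∧ treat c j ω = t2}).toReal

/-- The Horvitz–Thompson estimator `μ̂(t)`. -/
noncomputable def htEst {C : Type*} [Fintype C] {N : ℕ} (pt php : ℝ) (c : Fin N → C)
    (Y : Fin N → Bool → ℝ) (t : Bool) (ω : (C → Bool) × (Fin N → Bool)) : ℝ :=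
  (1 / (N : ℝ)) * ∑ i, if treat c i ω = t then Y i t / margProp pt php c i t else 0

/-- The covariance of two real random variables: `Cov[X,Y] = E[(X − E X)(Y − E Y)]`. -/
noncomputable def cov {Ω : Type*} [MeasurableSpace Ω] (P : Measure Ω) (X Y : Ω → ℝ) : ℝ :=
  ∫ ω, (X ω - ∫ x, X x ∂P) * (Y ω - ∫ x, Y x ∂P) ∂P

/-! Each estimator is a linear combination of the indicators of the events `{Z_i = t}`, so
bilinearity of the covariance gives
`Cov = N⁻² Σ_{i,j} Y_i(t1) Y_j(t2) (p_{ij}(t1,t2) − p(t1) p(t2)) / (p(t1) p(t2))`.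
The coefficient vanishes for units in different clusters, whose treatments are functions of
disjoint independent coordinates; it is `−p(t1) p(t2)` on the diagonal, since a unit cannot
receive both treatments; and it is `p(t1,t2) − p(t1) p(t2)` for distinct units of one cluster. -/

open Finset

lemma isProbabilityMeasure_bernoulliMeasureBool {p : ℝ} (h0 : 0 ≤ p) (h1 : p ≤ 1) :
    IsProbabilityMeasure (bernoulliMeasureBool p) :=
  ⟨by simp [bernoulliMeasureBool, ← ENNReal.ofReal_add h0 (sub_nonneg.2 h1)]⟩

lemma bernoulliMeasureBool_singleton_ne_zero {p : ℝ} (h0 : 0 < p) (h1 : p < 1) (b : Bool) :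
    bernoulliMeasureBool p {b} ≠ 0 := by
  cases b <;> simp [bernoulliMeasureBool, h0, h1]

lemma ProbabilityTheory.IndepFun.comp_measurePreserving {Ω Ω' β γ : Type*}
    {mΩ : MeasurableSpace Ω} {mΩ' : MeasurableSpace Ω'} {mβ : MeasurableSpace β}
    {mγ : MeasurableSpace γ} {μ : Measure Ω} {ν : Measure Ω'} {φ : Ω → Ω'} {f : Ω' → β} {g : Ω' → γ}
    (h : IndepFun f g ν) (hφ : MeasurePreserving φ μ ν) (hf : Measurable f)
    (hg : Measurable g) : IndepFun (f ∘ φ) (g ∘ φ) μ := by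
  rw [indepFun_iff_measure_inter_preimage_eq_mul] at h ⊢
  intro s t hs ht
  simp only [Set.preimage_comp, ← Set.preimage_inter,
    hφ.measure_preimage ((hf hs).inter (hg ht)).nullMeasurableSet,
    hφ.measure_preimage (hf hs).nullMeasurableSet, hφ.measure_preimage (hg ht).nullMeasurableSet]
  exact h s t hs ht

section IndicatorCovariance

variable {Ω : Type*} {mΩ : MeasurableSpace Ω} {μ : Measure Ω} [IsProbabilityMeasure μ]

lemma covariance_indicator_const {s t : Set Ω} (hs : MeasurableSet s) (ht : MeasurableSet t)
    (a b : ℝ) :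
    cov[s.indicator (fun _ => a), t.indicator (fun _ => b); μ]
      = a * b * (μ.real (s ∩ t) - μ.real s * μ.real t) := by
  rw [covariance_eq_sub (memLp_indicator_const 2 hs a (.inr (measure_ne_top μ s)))
      (memLp_indicator_const 2 ht b (.inr (measure_ne_top μ t))),
    Pi.mul_def]
  simp_rw [← Set.inter_indicator_mul]
  rw [integral_indicator_const _ (hs.inter ht),
    integral_indicator_const _ hs, integral_indicator_const _ ht]
  simp only [smul_eq_mul]
  ring

lemma covariance_sum_indicator_const {ι κ : Type*} [Fintype ι] [Fintype κ] {s : ι → Set Ω}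
    {t : κ → Set Ω} (hs : ∀ i, MeasurableSet (s i)) (ht : ∀ j, MeasurableSet (t j))
    (a : ι → ℝ) (b : κ → ℝ) :
    cov[fun ω => ∑ i, (s i).indicator (fun _ => a i) ω,
        fun ω => ∑ j, (t j).indicator (fun _ => b j) ω; μ]
      = ∑ i, ∑ j, a i * b j * (μ.real (s i ∩ t j) - μ.real (s i) * μ.real (t j)) := by
  rw [covariance_fun_sum_fun_sum
    (fun i => memLp_indicator_const 2 (hs i) (a i) (.inr (measure_ne_top μ _)))
    (fun j => memLp_indicator_const 2 (ht j) (b j) (.inr (measure_ne_top μ _)))]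
  simp_rw [covariance_indicator_const (hs _) (ht _)]

end IndicatorCovariance

lemma sum_fiberwise_sum_fiberwise_eq_sum_sum_ite {ι κ M : Type*} [Fintype ι] [Fintype κ]
    [DecidableEq κ] [AddCommMonoid M] (c : ι → κ) (g : ι → ι → M) :
    ∑ k, ∑ i ∈ univ.filter (fun i => c i = k), ∑ j ∈ univ.filter (fun j => c j = k), g i j
      = ∑ i, ∑ j, if c i = c j then g i j else 0 := by
  rw [← sum_fiberwise univ c fun i => ∑ j, if c i = c j then g i j else 0]
  refine sum_congr rfl fun k _ => sum_congr rfl fun i hi => ?_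
  rw [(mem_filter.1 hi).2.symm, sum_filter]
  simp only [eq_comm]

section Design

variable {C : Type*} [Fintype C] {N : ℕ} {pt php : ℝ}

instance [IsProbabilityMeasure (bernoulliMeasureBool pt)]
    [IsProbabilityMeasure (bernoulliMeasureBool php)] :
    IsProbabilityMeasure (designMeasure C N pt php) := by
  unfold designMeasure; infer_instance

lemma margProp_pos (hpt0 : 0 < pt) (hpt1 : pt < 1) (hphp0 : 0 < php) (hphp1 : php < 1)
    (c : Fin N → C) (i : Fin N) (t : Bool) : 0 < margProp pt php c i t := by
  have := isProbabilityMeasure_bernoulliMeasureBool hpt0.le hpt1.le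
  have := isProbabilityMeasure_bernoulliMeasureBool hphp0.le hphp1.le
  have hsub : ((Function.eval (c i) ⁻¹' {true} : Set (C → Bool)) ×ˢ
      (Function.eval i ⁻¹' {!t} : Set (Fin N → Bool))) ⊆
      {ω : (C → Bool) × (Fin N → Bool) | treat c i ω = t} := by
    rintro ω ⟨h1, h2⟩
    simp_all [treat]
  refine ENNReal.toReal_pos (ne_bot_of_le_ne_bot ?_ (measure_mono hsub)) (measure_ne_top _ _)
  rw [designMeasure, Measure.prod_prod,
    (measurePreserving_eval _ (c i)).measure_preimage (measurableSet_singleton _).nullMeasurableSet,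
    (measurePreserving_eval _ i).measure_preimage (measurableSet_singleton _).nullMeasurableSet]
  exact mul_ne_zero (bernoulliMeasureBool_singleton_ne_zero hpt0 hpt1 _)
    (bernoulliMeasureBool_singleton_ne_zero hphp0 hphp1 _)

lemma indepFun_treat [IsProbabilityMeasure (bernoulliMeasureBool pt)]
    [IsProbabilityMeasure (bernoulliMeasureBool php)] (c : Fin N → C) {i j : Fin N}
    (hc : c i ≠ c j) :
    IndepFun (treat c i) (treat c j) (designMeasure C N pt php) := by
  -- Indexing cluster and unit coordinates by `C ⊕ Fin N` turns the design into a single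
  -- product measure, whose coordinates form one independent family.
  let μ : C ⊕ Fin N → Measure Bool :=
    fun s => bernoulliMeasureBool (Sum.elim (fun _ => pt) (fun _ => php) s)
  have : ∀ s, IsProbabilityMeasure (μ s) := fun s => by cases s <;> assumption
  have hij : i ≠ j := fun h => hc (congrArg c h)
  have hunits := (iIndepFun_pi (μ := μ) (X := fun _ => id) fun _ => aemeasurable_id)
    |>.indepFun_prodMk_prodMk (fun s => measurable_pi_apply s) (.inl (c i)) (.inr i)
      (.inl (c j)) (.inr j) (by simpa using hc) Sum.inl_ne_inr Sum.inr_ne_inl (by simpa using hij)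
  have hxor : Measurable fun q : Bool × Bool => xor q.1 q.2 := measurable_of_countable _
  exact (hunits.comp hxor hxor).comp_measurePreserving
    (measurePreserving_sumPiEquivProdPi_symm μ) (by fun_prop) (by fun_prop)

lemma htEst_eq_sum_indicator (c : Fin N → C) (Y : Fin N → Bool → ℝ) (t : Bool) :
    htEst pt php c Y t = fun ω => 1 / (N : ℝ) *
      ∑ i, {ω | treat c i ω = t}.indicator (fun _ => Y i t / margProp pt php c i t) ω := by
  ext ω
  simp [htEst, Set.indicator_apply]

lemma measurableSet_setOf_treat (c : Fin N → C) (i : Fin N) (t : Bool) :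
    MeasurableSet {ω | treat c i ω = t} :=
  (Set.toFinite _).measurableSet

lemma measureReal_setOf_treat (c : Fin N → C) (i : Fin N) (t : Bool) :
    (designMeasure C N pt php).real {ω | treat c i ω = t} = margProp pt php c i t :=
  rfl

lemma measureReal_setOf_treat_inter (c : Fin N → C) (i j : Fin N) (t1 t2 : Bool) :
    (designMeasure C N pt php).real ({ω | treat c i ω = t1} ∩ {ω | treat c j ω = t2})
      = jointProp pt php c i j t1 t2 :=
  rfl

lemma jointProp_self_of_ne (c : Fin N → C) (i : Fin N) {t1 t2 : Bool} (ht : t1 ≠ t2) :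
    jointProp pt php c i i t1 t2 = 0 := by
  have : {ω : (C → Bool) × (Fin N → Bool) | treat c i ω = t1 ∧ treat c i ω = t2} = ∅ :=
    Set.eq_empty_of_forall_notMem fun ω h => ht (h.1.symm.trans h.2)
  simp [jointProp, this]

lemma jointProp_eq_mul_of_ne [IsProbabilityMeasure (bernoulliMeasureBool pt)]
    [IsProbabilityMeasure (bernoulliMeasureBool php)] (c : Fin N → C) {i j : Fin N}
    (hc : c i ≠ c j) (t1 t2 : Bool) :
    jointProp pt php c i j t1 t2 = margProp pt php c i t1 * margProp pt php c j t2 := by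
  rw [jointProp, margProp, margProp, ← ENNReal.toReal_mul]
  exact congrArg ENNReal.toReal <| (indepFun_treat c hc).measure_inter_preimage_eq_mul _ _
    (measurableSet_singleton t1) (measurableSet_singleton t2)

end Design

/-- Under the hole-punching graph-cluster randomization design with `0 < p_t < 1` and
`0 < p_hp < 1`, for `t1 ≠ t2` in `{0,1}` the covariance of the Horvitz–Thompson
estimators satisfies
`Cov[μ̂(t1), μ̂(t2)] = (1/N²)·[(p(t1,t2)/(p(t1)·p(t2)) − 1)·Σ_c S_c(t1,t2)
− (p(t1,t2)/(p(t1)·p(t2)))·Q(t1,t2)]`, where `p(t)` is the common marginal propensity,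
`p(t1,t2)` is the common joint propensity of distinct units in the same cluster,
`S_c(t1,t2) = Σ_{i∈c} Σ_{j∈c} Y_i(t1)·Y_j(t2)` and `Q(t1,t2) = Σ_i Y_i(t1)·Y_i(t2)`. -/
theorem ht_covariance_design
    {C : Type*} [Fintype C] [DecidableEq C] {N : ℕ} (hN : 1 ≤ N)
    (pt php : ℝ) (hpt0 : 0 < pt) (hpt1 : pt < 1) (hphp0 : 0 < php) (hphp1 : php < 1)
    (c : Fin N → C) (Y : Fin N → Bool → ℝ)
    (p : Bool → ℝ) (hp : ∀ (i : Fin N) (t : Bool), margProp pt php c i t = p t)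
    (pj : Bool → Bool → ℝ)
    (hpj : ∀ (i j : Fin N) (t1 t2 : Bool), i ≠ j → c i = c j →
      jointProp pt php c i j t1 t2 = pj t1 t2)
    (t1 t2 : Bool) (ht : t1 ≠ t2) :
    cov (designMeasure C N pt php) (htEst pt php c Y t1) (htEst pt php c Y t2)
      = (1 / (N : ℝ) ^ 2) *
          ((pj t1 t2 / (p t1 * p t2) - 1) *
              (∑ k : C, ∑ i ∈ Finset.univ.filter (fun i => c i = k),
                ∑ j ∈ Finset.univ.filter (fun j => c j = k), Y i t1 * Y j t2)
            - (pj t1 t2 / (p t1 * p t2)) * ∑ i, Y i t1 * Y i t2) := by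
  have := isProbabilityMeasure_bernoulliMeasureBool hpt0.le hpt1.le
  have := isProbabilityMeasure_bernoulliMeasureBool hphp0.le hphp1.le
  have hp_pos (t : Bool) : 0 < p t := hp ⟨0, hN⟩ t ▸ margProp_pos hpt0 hpt1 hphp0 hphp1 c _ t
  have hpair (i j : Fin N) : jointProp pt php c i j t1 t2 - p t1 * p t2
      = (pj t1 t2 - p t1 * p t2) * (if c i = c j then 1 else 0)
        - pj t1 t2 * (if i = j then 1 else 0) := by
    by_cases hij : i = j
    · simp [hij, jointProp_self_of_ne c j ht]
    by_cases hcij : c i = c j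
    · simp [hpj i j t1 t2 hij hcij, hcij, hij]
    · simp [jointProp_eq_mul_of_ne c hcij, hp, hcij, hij]
  change cov[_, _; _] = _
  rw [htEst_eq_sum_indicator, htEst_eq_sum_indicator, covariance_const_mul_left,
    covariance_const_mul_right, covariance_sum_indicator_const (measurableSet_setOf_treat c · t1)
    (measurableSet_setOf_treat c · t2), sum_fiberwise_sum_fiberwise_eq_sum_sum_ite]
  simp only [measureReal_setOf_treat, measureReal_setOf_treat_inter, hp, hpair]
  rw [← Finset.sum_congr rfl fun i _ => Fintype.sum_ite_eq i fun j => Y i t1 * Y j t2]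
  simp only [Finset.mul_sum, ← Finset.sum_sub_distrib]
  refine Finset.sum_congr rfl fun i _ => Finset.sum_congr rfl fun j _ => ?_
  have hp1 := (hp_pos t1).ne'
  have hp2 := (hp_pos t2).ne'
  split_ifs <;> field_simp <;> ring
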